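/- arXiv:2303.15876 — 8 statements merged into one kernel-verified Lean document; each statement's English description precedes it below -/
import Mathlib

section
/- The closure of the range of I - T, where T : H → H is a nonexpansive operator on a real Hilbert space H, is a convex set; hence the projection of 0 onto this closure (the infimal displacement vector) is well-defined. -/
open RealInnerProductSpace


/-- A map is nonexpansive if it is 1-Lipschitz. -/
def Nonexpansive {H : Type*} [NormedAddCommGroup H] (T : H → H) : Prop :=
  ∀ x y, ‖T x - T y‖ ≤ ‖x - y‖

lemma mono_aux {H : Type*} [NormedAddCommGroup H] [InnerProductSpace ℝ H]
    (T : H → H) (hT : Nonexpansive T) (x z : H) :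
    (0:ℝ) ≤ ⟪(x - T x) - (z - T z), x - z⟫ := by
  have h : (x - T x) - (z - T z) = (x - z) - (T x - T z) := by abel
  rw [h, inner_sub_left, real_inner_self_eq_norm_sq]
  have cs := real_inner_le_norm (T x - T z) (x - z)
  have hn := hT x z
  nlinarith [norm_nonneg (x - z)]

lemma fp_exists {H : Type*} [NormedAddCommGroup H] [InnerProductSpace ℝ H] [CompleteSpace H]
    (T : H → H) (hT : Nonexpansive T) (p : H) {l : ℝ} (hl : 0 < l) :
    ∃ y : H, y - T y + l • y = p := by
  set K : NNReal := ⟨1 / (1 + l), by positivity⟩ with hK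
  have hK1 : K < 1 := by
    rw [← NNReal.coe_lt_coe]
    show 1 / (1 + l) < 1
    rw [div_lt_one (by linarith)]; linarith
  set g : H → H := fun x => (1 / (1 + l)) • (T x + p) with hg
  have hlip : LipschitzWith K g := by
    apply LipschitzWith.of_dist_le_mul
    intro x y
    simp only [hg, dist_eq_norm, ← smul_sub]
    have h3 : T x + p - (T y + p) = T x - T y := by abel
    rw [h3, norm_smul]
    simp only [Real.norm_eq_abs, abs_of_pos (by positivity : (0:ℝ) < 1/(1+l))]
    have := hT x y
    have h1 : (0:ℝ) ≤ 1/(1+l) := by positivity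
    calc 1/(1+l) * ‖T x - T y‖ ≤ 1/(1+l) * ‖x - y‖ := by nlinarith
      _ = ↑K * ‖x - y‖ := rfl
  have hc : ContractingWith K g := ⟨hK1, hlip⟩
  refine ⟨hc.fixedPoint g, ?_⟩
  have hfix : g (hc.fixedPoint g) = hc.fixedPoint g := hc.fixedPoint_isFixedPt
  set y := hc.fixedPoint g
  have h1l : (1 + l) ≠ 0 := by positivity
  have key : (1 + l) • y = T y + p := by
    conv_lhs => rw [← hfix]
    simp only [hg, smul_smul, mul_one_div, div_self h1l, one_smul]
  have h2 : (1 + l) • y = y + l • y := by rw [add_smul, one_smul]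
  rw [h2] at key
  have h4 : y - T y + l • y = (y + l • y) - T y := by abel
  rw [h4, key]; abel

lemma scalar_aux {l N X Cp ε : ℝ} (hl : 0 < l) (hN : 0 ≤ N) (hX : 0 ≤ X) (hCp : 0 ≤ Cp)
    (hε : 0 < ε) (hbound : l * N ^ 2 ≤ Cp + l * N * X)
    (hl1 : l * (2 * (X + 1)) ≤ ε) (hl2 : l * (2 * (Cp + 1)) ≤ ε ^ 2) :
    l * N < ε := by
  rcases le_or_gt N (2 * X) with hcase | hcase
  · nlinarith
  · have hN0 : 0 < N := lt_of_le_of_lt (by positivity) hcase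
    have hsq : l * N ^ 2 ≤ 2 * Cp := by nlinarith
    have hsq2 : (l * N) ^ 2 < ε ^ 2 := by nlinarith
    nlinarith [mul_nonneg hl.le hN]

lemma seg_mem {H : Type*} [NormedAddCommGroup H] [InnerProductSpace ℝ H] [CompleteSpace H]
    (T : H → H) (hT : Nonexpansive T) (a b : H) {t : ℝ} (ht : 0 ≤ t) (ht1 : t ≤ 1) :
    t • (a - T a) + (1 - t) • (b - T b) ∈ closure (Set.range fun x => x - T x) := by
  set u := a - T a with hu
  set v := b - T b with hv
  set p := t • u + (1 - t) • v with hp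
  set xb := t • a + (1 - t) • b with hxb
  set C : ℝ := t * ⟪u, a⟫ + (1 - t) * ⟪v, b⟫ - ⟪p, xb⟫ with hC
  set Cp : ℝ := max C 0 with hCp
  have hCp0 : 0 ≤ Cp := le_max_right _ _
  have hCCp : C ≤ Cp := le_max_left _ _
  rw [Metric.mem_closure_iff]
  intro ε hε
  set l : ℝ := min (ε / (2 * (‖xb‖ + 1))) (ε ^ 2 / (2 * (Cp + 1))) with hldef
  have hl : 0 < l := lt_min (by positivity) (by positivity)
  obtain ⟨y, hy⟩ := fp_exists T hT p hl
  have hAy : y - T y = p - l • y := by rw [← hy]; abel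
  have h1 := mono_aux T hT y a
  have h2 := mono_aux T hT y b
  rw [hAy, ← hu] at h1
  rw [hAy, ← hv] at h2
  have h1mt : (0:ℝ) ≤ 1 - t := by linarith
  have key : l * ‖y‖ ^ 2 ≤ C + l * ⟪y, xb⟫ := by
    rw [hC, hp, hxb] at *
    simp only [hp, hxb, inner_sub_left, inner_sub_right, inner_add_left, inner_add_right,
      real_inner_smul_left, real_inner_smul_right, real_inner_self_eq_norm_sq] at h1 h2 ⊢
    nlinarith [mul_nonneg ht h1, mul_nonneg h1mt h2]
  have hbound : l * ‖y‖ ^ 2 ≤ Cp + l * ‖y‖ * ‖xb‖ := by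
    have := real_inner_le_norm y xb
    nlinarith
  have hl1 : l * (2 * (‖xb‖ + 1)) ≤ ε := by
    rw [← le_div_iff₀ (by positivity)]; exact min_le_left _ _
  have hl2 : l * (2 * (Cp + 1)) ≤ ε ^ 2 := by
    rw [← le_div_iff₀ (by positivity)]; exact min_le_right _ _
  have hly : l * ‖y‖ < ε :=
    scalar_aux hl (norm_nonneg y) (norm_nonneg xb) hCp0 hε hbound hl1 hl2
  refine ⟨y - T y, ⟨y, rfl⟩, ?_⟩
  rw [dist_eq_norm, hAy]
  have : p - (p - l • y) = l • y := by abel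
  rw [this, norm_smul, Real.norm_eq_abs, abs_of_pos hl]
  exact hly

/-- The closure of the range of `I - T` is convex, and hence the projection of `0` onto it
(the infimal displacement vector) is well-defined: there is a unique element of minimal norm. -/
theorem closure_range_id_sub_convex_and_idv_well_defined
    {H : Type*} [NormedAddCommGroup H] [InnerProductSpace ℝ H] [CompleteSpace H]
    (T : H → H) (hT : Nonexpansive T) :
    Convex ℝ (closure (Set.range fun x => x - T x)) ∧
    ∃! v : H, v ∈ closure (Set.range fun x => x - T x) ∧
      ∀ w ∈ closure (Set.range fun x => x - T x), ‖v‖ ≤ ‖w‖ := by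
  set S := closure (Set.range fun x => x - T x) with hS
  have hconv : Convex ℝ S := by
    intro x hx y hy t s ht hs hts
    have hs1 : s = 1 - t := by linarith
    subst hs1
    have hcont : Continuous (Function.uncurry fun u v : H => t • u + (1 - t) • v) := by
      fun_prop
    have := map_mem_closure₂ (f := fun u v : H => t • u + (1 - t) • v) hcont hx hy
      (u := S) ?_
    · rwa [closure_closure] at this
    · rintro _ ⟨a, rfl⟩ _ ⟨b, rfl⟩
      exact seg_mem T hT a b ht (by linarith)
  refine ⟨hconv, ?_⟩
  have hne : S.Nonempty := ⟨0 - T 0, subset_closure ⟨0, rfl⟩⟩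
  have hcomp : IsComplete S := isClosed_closure.isComplete
  obtain ⟨v, hvS, hvmin⟩ := exists_norm_eq_iInf_of_complete_convex hne hcomp hconv 0
  have hbdd : BddBelow (Set.range fun w : S => ‖(0:H) - (w:H)‖) := by
    refine ⟨0, ?_⟩
    rintro x ⟨w, rfl⟩
    positivity
  have hmin : ∀ w ∈ S, ‖v‖ ≤ ‖w‖ := by
    intro w hw
    have h1 : ‖(0:H) - v‖ ≤ ‖(0:H) - w‖ := by
      rw [hvmin]
      exact ciInf_le hbdd ⟨w, hw⟩
    simpa using h1
  refine ⟨v, ⟨hvS, hmin⟩, ?_⟩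
  rintro v' ⟨hv'S, hv'min⟩
  have hm : (1/2 : ℝ) • v' + (1/2 : ℝ) • v ∈ S :=
    hconv hv'S hvS (by norm_num) (by norm_num) (by norm_num)
  set m := (1/2 : ℝ) • v' + (1/2 : ℝ) • v with hmdef
  have hsum : ‖v' + v‖ = 2 * ‖m‖ := by
    have : v' + v = (2:ℝ) • m := by
      rw [hmdef, smul_add, smul_smul, smul_smul]; norm_num
    rw [this, norm_smul]; simp
  have hpar := parallelogram_law_with_norm ℝ v' v
  have h1 : ‖v‖ ≤ ‖m‖ := hmin m hm
  have h2 : ‖v'‖ ≤ ‖v‖ := hv'min v hvS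
  have h3 : ‖v‖ ≤ ‖v'‖ := hmin v' hv'S
  have h4 : ‖v' - v‖ = 0 := by nlinarith [norm_nonneg (v' - v), mul_self_le_mul_self (norm_nonneg v) h1, hsum, hpar, h2, h3, norm_nonneg v]
  have := norm_eq_zero.mp h4
  exact sub_eq_zero.mp this
end

section
/- Let T be nonexpansive with infimal displacement vector v attained at x_⋆ (i.e., v = x_⋆ − T x_⋆), and let x^k be the Picard iteration x^{k+1} = T x^k. Then ‖(x^k − x^0)/k + v‖² ≤ (4/k²) ‖x^0 − x_⋆‖² for all k ≥ 1. -/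
/-!
If `v` is the minimal displacement and `y - T y = v`, then at the midpoint `m = y - v/2` the
estimate `‖v‖ ≤ ‖m - T m‖ = ‖v/2 - (T m - T y)‖` together with `‖T m - T y‖ ≤ ‖v/2‖` is an
equality case of the triangle inequality, which by strict convexity forces `m - T m = v`.
Two half steps show that `y - v = T y` again has displacement `v`, so the orbit of `x⋆` is the
line `x⋆ - k v`. The orbit of `x⁰` stays within `‖x⁰ - x⋆‖` of it, whence
`‖x^k - x⁰ + k v‖ ≤ 2 ‖x⁰ - x⋆‖`.
-/

open Function

theorem eq_neg_of_norm_le_of_two_mul_norm_le_norm_sub {E : Type*} [NormedAddCommGroup E]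
    [NormedSpace ℝ E] [StrictConvexSpace ℝ E] {a e : E} (he : ‖e‖ ≤ ‖a‖)
    (h : 2 * ‖a‖ ≤ ‖a - e‖) : e = -a := by
  have htri := norm_sub_le a e
  have hnorm : ‖a‖ = ‖-e‖ := by rw [norm_neg]; linarith
  have hadd : ‖a + -e‖ = ‖a‖ + ‖-e‖ := by rw [← sub_eq_add_neg, norm_neg]; linarith
  rw [eq_of_norm_eq_of_norm_add_eq hnorm hadd, neg_neg]

namespace Nonexpansive

variable {E : Type*} [NormedAddCommGroup E]

theorem iterate {T : E → E} (hT : Nonexpansive T) (n : ℕ) : Nonexpansive T^[n] := by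
  induction n with
  | zero => exact fun x y => le_rfl
  | succ n ih =>
    intro x y
    rw [iterate_succ_apply', iterate_succ_apply']
    exact (hT _ _).trans (ih x y)

theorem norm_iterate_sub_add_nsmul_le {T : E → E} (hT : Nonexpansive T) {v xs : E} {n : ℕ}
    (hxs : T^[n] xs = xs - n • v) (x : E) :
    ‖T^[n] x - x + n • v‖ ≤ 2 * ‖x - xs‖ :=
  calc ‖T^[n] x - x + n • v‖ = ‖(T^[n] x - T^[n] xs) + (xs - x)‖ := by rw [hxs]; abel_nf
    _ ≤ ‖x - xs‖ + ‖x - xs‖ := norm_add_le_of_le (hT.iterate n x xs) (norm_sub_rev xs x).le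
    _ = 2 * ‖x - xs‖ := by ring

variable [NormedSpace ℝ E] [StrictConvexSpace ℝ E] {T : E → E} {v : E}

theorem sub_half_smul_sub_apply_eq (hT : Nonexpansive T) (hvmin : ∀ z, ‖v‖ ≤ ‖z - T z‖)
    {y : E} (hy : y - T y = v) :
    (y - (2⁻¹ : ℝ) • v) - T (y - (2⁻¹ : ℝ) • v) = v := by
  set m := y - (2⁻¹ : ℝ) • v
  have hdisp : m - T m = (2⁻¹ : ℝ) • v - (T m - T y) := by
    rw [show T y = y - v by rw [← hy, sub_sub_cancel]]; module
  have hstep : ‖T m - T y‖ ≤ ‖(2⁻¹ : ℝ) • v‖ := by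
    simpa [m] using hT m y
  have hhalf : 2 * ‖(2⁻¹ : ℝ) • v‖ = ‖v‖ := by
    rw [norm_smul, Real.norm_of_nonneg (by norm_num)]; ring
  have hmin : 2 * ‖(2⁻¹ : ℝ) • v‖ ≤ ‖(2⁻¹ : ℝ) • v - (T m - T y)‖ :=
    hhalf ▸ hdisp ▸ hvmin m
  rw [hdisp, eq_neg_of_norm_le_of_two_mul_norm_le_norm_sub hstep hmin]
  module

theorem apply_sub_apply_apply_eq (hT : Nonexpansive T) (hvmin : ∀ z, ‖v‖ ≤ ‖z - T z‖)
    {y : E} (hy : y - T y = v) : T y - T (T y) = v := by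
  have hmid := hT.sub_half_smul_sub_apply_eq hvmin hy
  have hTy : (y - (2⁻¹ : ℝ) • v) - (2⁻¹ : ℝ) • v = T y := by
    rw [← hy]; module
  rw [← hTy]
  exact hT.sub_half_smul_sub_apply_eq hvmin hmid

theorem iterate_eq_sub_nsmul (hT : Nonexpansive T) (hvmin : ∀ z, ‖v‖ ≤ ‖z - T z‖)
    {y : E} (hy : y - T y = v) (n : ℕ) : T^[n] y = y - n • v := by
  induction n generalizing y with
  | zero => simp
  | succ n ih =>
    rw [iterate_succ_apply, ih (hT.apply_sub_apply_apply_eq hvmin hy), succ_nsmul, ← hy]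
    abel

end Nonexpansive

theorem picard_normalized_iterate_rate_general
    {H : Type*} [NormedAddCommGroup H] [InnerProductSpace ℝ H]
    (T : H → H) (hT : Nonexpansive T) (v xs : H)
    (hvmin : ∀ w ∈ closure (Set.range fun x => x - T x), ‖v‖ ≤ ‖w‖)
    (hxs : xs - T xs = v)
    (x : ℕ → H) (hx : ∀ k, x (k + 1) = T (x k)) :
    ∀ k : ℕ, 1 ≤ k →
      ‖(1 / (k : ℝ)) • (x k - x 0) + v‖ ^ 2 ≤ (4 / (k : ℝ) ^ 2) * ‖x 0 - xs‖ ^ 2 := by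
  have horbit : ∀ k, x k = T^[k] (x 0) := by
    intro k
    induction k with
    | zero => rfl
    | succ n ih => rw [hx, ih, iterate_succ_apply']
  have hmin : ∀ z, ‖v‖ ≤ ‖z - T z‖ := fun z => hvmin _ (subset_closure ⟨z, rfl⟩)
  intro k hk
  have hk0 : (0 : ℝ) < k := by exact_mod_cast hk
  have hbound : ‖x k - x 0 + k • v‖ ≤ 2 * ‖x 0 - xs‖ := by
    rw [horbit k]
    exact hT.norm_iterate_sub_add_nsmul_le (hT.iterate_eq_sub_nsmul hmin hxs k) (x 0)
  have hscale : (1 / (k : ℝ)) • (x k - x 0) + v = (1 / (k : ℝ)) • (x k - x 0 + k • v) := by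
    rw [← Nat.cast_smul_eq_nsmul ℝ]; match_scalars <;> field_simp
  calc ‖(1 / (k : ℝ)) • (x k - x 0) + v‖ ^ 2 = (1 / k * ‖x k - x 0 + k • v‖) ^ 2 := by
        rw [hscale, norm_smul, Real.norm_of_nonneg (by positivity)]
    _ ≤ (1 / k * (2 * ‖x 0 - xs‖)) ^ 2 := by gcongr
    _ = (4 / (k : ℝ) ^ 2) * ‖x 0 - xs‖ ^ 2 := by ring

/-- For the Picard iteration of a nonexpansive operator whose infimal displacement vector
`v` is attained at `x⋆`, the normalized iterate converges to `-v` at rate `O(1/k²)`. -/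
theorem picard_normalized_iterate_rate
    {H : Type*} [NormedAddCommGroup H] [InnerProductSpace ℝ H] [CompleteSpace H]
    (T : H → H) (hT : Nonexpansive T) (v xs : H)
    (hv : v ∈ closure (Set.range fun x => x - T x))
    (hvmin : ∀ w ∈ closure (Set.range fun x => x - T x), ‖v‖ ≤ ‖w‖)
    (hxs : xs - T xs = v)
    (x : ℕ → H) (hx : ∀ k, x (k + 1) = T (x k)) :
    ∀ k : ℕ, 1 ≤ k →
      ‖(1 / (k : ℝ)) • (x k - x 0) + v‖ ^ 2 ≤ (4 / (k : ℝ) ^ 2) * ‖x 0 - xs‖ ^ 2 :=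
  picard_normalized_iterate_rate_general T hT v xs hvmin hxs x hx
end

section
/- Let T be nonexpansive with infimal displacement vector v = x_⋆ − T x_⋆, and consider the KM iteration with constant stepsize λ_k = 1/2, i.e., x^{k+1} = (x^k + T x^k)/2. Then (‖x^k − T x^k‖ − ‖v‖)² ≤ (4/(k+1)) ‖x^0 − x_⋆‖² for all k ≥ 0. -/
open RealInnerProductSpace

section Aux

variable {H : Type*} [NormedAddCommGroup H] [InnerProductSpace ℝ H] [CompleteSpace H]

lemma aux_mono (T : H → H) (hT : ∀ x y, ‖T x - T y‖ ≤ ‖x - y‖) (a b : H) :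
    0 ≤ ⟪(a - T a) - (b - T b), a - b⟫ := by
  have h1 := hT a b
  have h2 : ⟪T a - T b, a - b⟫ ≤ ‖T a - T b‖ * ‖a - b‖ := real_inner_le_norm _ _
  have h3 : ((a - T a) - (b - T b)) = (a - b) - (T a - T b) := by abel
  rw [h3, inner_sub_left, real_inner_self_eq_norm_sq]
  nlinarith [norm_nonneg (a - b), norm_nonneg (T a - T b)]

lemma aux_fixed (T : H → H) (hT : ∀ x y, ‖T x - T y‖ ≤ ‖x - y‖) (ε : ℝ) (hε : 0 < ε) :
    ∃ x : H, T x = (1 + ε) • x := by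
  haveI : Nonempty H := ⟨0⟩
  set f : H → H := fun z => (1 + ε)⁻¹ • T z with hf
  have hεpos : (0:ℝ) < 1 + ε := by linarith
  set K : NNReal := ⟨(1+ε)⁻¹, by positivity⟩ with hK
  have hlip : LipschitzWith K f := by
    apply LipschitzWith.of_dist_le_mul
    intro a b
    have h1 : f a - f b = (1+ε)⁻¹ • (T a - T b) := by rw [hf]; simp [smul_sub]
    rw [dist_eq_norm, h1, norm_smul, dist_eq_norm]
    have h2 : ‖(1+ε)⁻¹‖ = (1+ε)⁻¹ := by
      rw [Real.norm_eq_abs, abs_of_pos (by positivity)]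
    rw [h2]
    have hc : (K : ℝ) = (1+ε)⁻¹ := rfl
    rw [hc]
    exact mul_le_mul_of_nonneg_left (hT a b) (by positivity)
  have hcon : ContractingWith K f := by
    constructor
    · rw [← NNReal.coe_lt_coe]
      show (1+ε)⁻¹ < (1:ℝ)
      rw [inv_lt_one_iff₀]
      right; linarith
    · exact hlip
  refine ⟨hcon.fixedPoint f, ?_⟩
  have hfix : f (hcon.fixedPoint f) = hcon.fixedPoint f := hcon.fixedPoint_isFixedPt
  set p := hcon.fixedPoint f
  have h3 : (1+ε) • f p = (1+ε) • p := by rw [hfix]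
  rw [hf] at h3
  simpa [smul_smul, mul_inv_cancel₀ (ne_of_gt hεpos)] using h3

lemma aux_star (T : H → H) (hT : ∀ x y, ‖T x - T y‖ ≤ ‖x - y‖) (v : H)
    (hvmin : ∀ w ∈ closure (Set.range fun x => x - T x), ‖v‖ ≤ ‖w‖)
    (ε : ℝ) (hε : 0 < ε) :
    ∃ y : H, ‖v‖ ≤ ‖y‖ ∧ ∀ u₁ : H,
      ‖y‖^2 + ⟪u₁ - T u₁, y⟫ ≤ ε * ⟪y, u₁⟫ + ε * ⟪u₁ - T u₁, u₁⟫ := by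
  obtain ⟨x, hTx⟩ := aux_fixed T hT ε hε
  have hneg : x - T x = -(ε • x) := by rw [hTx]; module
  refine ⟨ε • x, ?_, ?_⟩
  · have h1 : -(ε • x) ∈ closure (Set.range fun z => z - T z) :=
      subset_closure ⟨x, hneg⟩
    simpa using hvmin _ h1
  · intro u₁
    have h0 := aux_mono T hT x u₁
    rw [hneg] at h0
    have hexp : ⟪-(ε • x) - (u₁ - T u₁), x - u₁⟫
        = -(ε*‖x‖^2) - ⟪u₁ - T u₁, x⟫ + ε*⟪x, u₁⟫ + ⟪u₁ - T u₁, u₁⟫ := by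
      simp [inner_sub_left, inner_sub_right, inner_neg_left, real_inner_smul_left,
        real_inner_self_eq_norm_sq]
      ring
    rw [hexp] at h0
    have h1 : ε*‖x‖^2 + ⟪u₁ - T u₁, x⟫ ≤ ε*⟪x, u₁⟫ + ⟪u₁ - T u₁, u₁⟫ := by linarith
    have h2 := mul_le_mul_of_nonneg_left h1 hε.le
    have e1 : ‖ε • x‖^2 = ε*(ε*‖x‖^2) := by
      rw [norm_smul, Real.norm_eq_abs, abs_of_pos hε]; ring
    have e2 : ⟪u₁ - T u₁, ε • x⟫ = ε * ⟪u₁ - T u₁, x⟫ := real_inner_smul_right _ _ _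
    have e3 : ⟪ε • x, u₁⟫ = ε * ⟪x, u₁⟫ := real_inner_smul_left _ _ _
    rw [e1, e2, e3]
    nlinarith [h2]

set_option maxHeartbeats 1000000 in
lemma aux_key (T : H → H) (hT : ∀ x y, ‖T x - T y‖ ≤ ‖x - y‖) (v xs : H)
    (hv : v ∈ closure (Set.range fun x => x - T x))
    (hvmin : ∀ w ∈ closure (Set.range fun x => x - T x), ‖v‖ ≤ ‖w‖)
    (hxs : xs - T xs = v) (u : H) :
    ‖v‖ ^ 2 ≤ ⟪v, u - T u⟫ := by
  refine le_of_forall_pos_le_add ?_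
  intro η hη
  obtain ⟨M, hMdef, hM0⟩ : ∃ M : ℝ, M = ‖v‖ + ‖xs‖ + ‖v‖*‖xs‖ + 1 ∧ 0 < M :=
    ⟨_, rfl, by positivity⟩
  obtain ⟨τ, hτdef, hτ0⟩ : ∃ τ : ℝ, τ = η/(2*(‖u - T u‖+1)) ∧ 0 < τ :=
    ⟨_, rfl, by positivity⟩
  obtain ⟨δ, hδdef, hδ0⟩ : ∃ δ : ℝ, δ = τ^2/(8*(M+1)) ∧ 0 < δ :=
    ⟨_, rfl, div_pos (pow_pos hτ0 2) (by linarith)⟩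
  obtain ⟨w', hw'mem, hwd⟩ := Metric.mem_closure_iff.mp hv δ hδ0
  obtain ⟨u', hu'⟩ := hw'mem
  obtain ⟨D1, hD1def, hD1⟩ : ∃ d : ℝ, d = (M + ‖w'‖)*‖u'‖ + 1 ∧ 0 < d :=
    ⟨_, rfl, by nlinarith [mul_nonneg (by nlinarith [norm_nonneg w'] : (0:ℝ) ≤ M + ‖w'‖) (norm_nonneg u')]⟩
  obtain ⟨D2, hD2def, hD2⟩ : ∃ d : ℝ, d = (M + ‖u - T u‖)*‖u‖ + 1 ∧ 0 < d :=
    ⟨_, rfl, by nlinarith [mul_nonneg (by nlinarith [norm_nonneg (u - T u)] : (0:ℝ) ≤ M + ‖u - T u‖) (norm_nonneg u)]⟩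
  obtain ⟨ε, hε, hε1, hεD1, hεD2⟩ :
      ∃ e : ℝ, 0 < e ∧ e ≤ 1 ∧ e ≤ τ^2/(8*D1) ∧ e ≤ η/(2*D2) :=
    ⟨min 1 (min (τ^2/(8*D1)) (η/(2*D2))),
      lt_min one_pos (lt_min (div_pos (pow_pos hτ0 2) (by linarith)) (div_pos hη (by linarith))),
      min_le_left _ _,
      le_trans (min_le_right _ _) (min_le_left _ _),
      le_trans (min_le_right _ _) (min_le_right _ _)⟩
  obtain ⟨y, hyv, star⟩ := aux_star T hT v hvmin ε hε
  have hyv2 : ‖v‖^2 ≤ ‖y‖^2 := pow_le_pow_left₀ (norm_nonneg v) hyv 2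
  -- bound ‖y‖ ≤ M
  have hstar_xs := star xs
  rw [hxs] at hstar_xs
  have c1 : ⟪y, xs⟫ ≤ ‖y‖*‖xs‖ := real_inner_le_norm _ _
  have c2 : ⟪v, xs⟫ ≤ ‖v‖*‖xs‖ := real_inner_le_norm _ _
  have c3 : -(‖v‖*‖y‖) ≤ ⟪v, y⟫ := by
    have h := abs_real_inner_le_norm v y
    cases abs_le.mp h with
    | intro h1 h2 => linarith
  have e1 : ε*⟪y, xs⟫ ≤ ‖y‖*‖xs‖ := by
    calc ε*⟪y, xs⟫ ≤ ε*(‖y‖*‖xs‖) := mul_le_mul_of_nonneg_left c1 hε.le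
    _ ≤ 1*(‖y‖*‖xs‖) := mul_le_mul_of_nonneg_right hε1 (by positivity)
    _ = ‖y‖*‖xs‖ := one_mul _
  have e2 : ε*⟪v, xs⟫ ≤ ‖v‖*‖xs‖ := by
    calc ε*⟪v, xs⟫ ≤ ε*(‖v‖*‖xs‖) := mul_le_mul_of_nonneg_left c2 hε.le
    _ ≤ 1*(‖v‖*‖xs‖) := mul_le_mul_of_nonneg_right hε1 (by positivity)
    _ = ‖v‖*‖xs‖ := one_mul _
  have hq : ‖y‖^2 ≤ ‖v‖*‖y‖ + ‖y‖*‖xs‖ + ‖v‖*‖xs‖ := by linarith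
  have hyM : ‖y‖ ≤ M := by
    rw [hMdef]
    by_contra hcon
    push_neg at hcon
    have hy1 : (1:ℝ) ≤ ‖y‖ := by
      linarith [norm_nonneg v, norm_nonneg xs, mul_nonneg (norm_nonneg v) (norm_nonneg xs)]
    linarith [norm_nonneg v, norm_nonneg xs, norm_nonneg y,
      mul_le_mul_of_nonneg_right hcon.le (norm_nonneg y),
      mul_le_mul_of_nonneg_left hy1 (by positivity : (0:ℝ) ≤ ‖v‖*‖xs‖+1)]
  -- closeness of y to -v
  have hu'' : u' - T u' = w' := hu'
  have hstar_u' := star u'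
  rw [hu''] at hstar_u'
  have b1 : ε*⟪y, u'⟫ + ε*⟪w', u'⟫ ≤ τ^2/8 := by
    have s1 : ⟪y, u'⟫ ≤ M*‖u'‖ := le_trans (real_inner_le_norm _ _)
      (mul_le_mul_of_nonneg_right hyM (norm_nonneg _))
    have s2 : ⟪w', u'⟫ ≤ ‖w'‖*‖u'‖ := real_inner_le_norm _ _
    have s3 : ε*⟪y, u'⟫ + ε*⟪w', u'⟫ ≤ ε*D1 := by
      have h : ⟪y, u'⟫ + ⟪w', u'⟫ ≤ D1 := by rw [hD1def]; nlinarith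
      nlinarith [mul_le_mul_of_nonneg_left h hε.le]
    have s4 : ε*D1 ≤ τ^2/8 := by
      have h := mul_le_mul_of_nonneg_right hεD1 hD1.le
      calc ε*D1 ≤ τ^2/(8*D1)*D1 := h
      _ = τ^2/8 := by field_simp
    linarith
  have hvw' : ‖v - w'‖ ≤ δ := by rw [dist_eq_norm] at hwd; linarith
  have c4 : ⟪v - w', y⟫ ≤ δ*M := by
    calc ⟪v - w', y⟫ ≤ ‖v - w'‖*‖y‖ := real_inner_le_norm _ _
    _ ≤ δ*M := mul_le_mul hvw' hyM (norm_nonneg _) hδ0.le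
  have hδM : δ*M ≤ τ^2/8 := by
    rw [hδdef, div_mul_eq_mul_div, div_le_div_iff₀ (by linarith) (by norm_num)]
    nlinarith [sq_nonneg τ]
  have hsplit : ⟪v, y⟫ = ⟪w', y⟫ + ⟪v - w', y⟫ := by
    rw [← inner_add_left]
    congr 1
    abel
  have hclose2 : ‖v + y‖^2 ≤ τ^2 := by
    have hexp : ‖v+y‖^2 = ‖v‖^2 + 2*⟪v, y⟫ + ‖y‖^2 := norm_add_sq_real v y
    have hw'y : ⟪w', y⟫ ≤ τ^2/8 - ‖y‖^2 := by linarith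
    linarith [sq_nonneg τ]
  have hvy : ‖v + y‖ ≤ τ := by nlinarith [norm_nonneg (v+y)]
  -- final
  have hstar_u := star u
  have b2 : ε*⟪y, u⟫ + ε*⟪u - T u, u⟫ ≤ η/2 := by
    have s1 : ⟪y, u⟫ ≤ M*‖u‖ := le_trans (real_inner_le_norm _ _)
      (mul_le_mul_of_nonneg_right hyM (norm_nonneg _))
    have s2 : ⟪u - T u, u⟫ ≤ ‖u - T u‖*‖u‖ := real_inner_le_norm _ _
    have s3 : ε*⟪y, u⟫ + ε*⟪u - T u, u⟫ ≤ ε*D2 := by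
      have h : ⟪y, u⟫ + ⟪u - T u, u⟫ ≤ D2 := by rw [hD2def]; nlinarith
      nlinarith [mul_le_mul_of_nonneg_left h hε.le]
    have s4 : ε*D2 ≤ η/2 := by
      have h := mul_le_mul_of_nonneg_right hεD2 hD2.le
      calc ε*D2 ≤ η/(2*D2)*D2 := h
      _ = η/2 := by field_simp
    linarith
  have c5 : -(η/2) ≤ ⟪v + y, u - T u⟫ := by
    have s1 : -(‖v+y‖*‖u - T u‖) ≤ ⟪v + y, u - T u⟫ := by
      have h := abs_real_inner_le_norm (v+y) (u - T u)
      cases abs_le.mp h with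
      | intro h1 h2 => linarith
    have s2 : ‖v+y‖*‖u - T u‖ ≤ τ*‖u - T u‖ :=
      mul_le_mul_of_nonneg_right hvy (norm_nonneg _)
    have s3 : τ*‖u - T u‖ ≤ η/2 := by
      rw [hτdef, div_mul_eq_mul_div, div_le_div_iff₀ (by positivity) (by norm_num)]
      nlinarith [norm_nonneg (u - T u)]
    linarith
  have hfin : ⟪v, u - T u⟫ = ⟪v + y, u - T u⟫ - ⟪u - T u, y⟫ := by
    rw [real_inner_comm y (u - T u), ← inner_sub_left]
    congr 1
    abel
  rw [hfin]
  linarith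

end Aux

/-- For the KM iteration with constant stepsize `1/2`, the norm of the fixed-point residual
converges to `‖v‖` at rate `O(1/k)`. -/
theorem km_half_residual_norm_rate
    {H : Type*} [NormedAddCommGroup H] [InnerProductSpace ℝ H] [CompleteSpace H]
    (T : H → H) (hT : Nonexpansive T) (v xs : H)
    (hv : v ∈ closure (Set.range fun x => x - T x))
    (hvmin : ∀ w ∈ closure (Set.range fun x => x - T x), ‖v‖ ≤ ‖w‖)
    (hxs : xs - T xs = v)
    (x : ℕ → H)
    (hx : ∀ k, x (k + 1) = (1 / 2 : ℝ) • x k + (1 / 2 : ℝ) • T (x k)) :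
    ∀ k : ℕ, (‖x k - T (x k)‖ - ‖v‖) ^ 2 ≤ (4 / ((k : ℝ) + 1)) * ‖x 0 - xs‖ ^ 2 := by
  have hvle : ∀ k, ‖v‖ ≤ ‖x k - T (x k)‖ := fun k =>
    hvmin _ (subset_closure ⟨x k, rfl⟩)
  -- residual monotonicity
  have res_mono : ∀ k, ‖x (k+1) - T (x (k+1))‖ ≤ ‖x k - T (x k)‖ := by
    intro k
    have hdiff : x (k+1) - x k = -((1/2 : ℝ) • (x k - T (x k))) := by
      rw [hx k]; module
    have hsplit : x (k+1) - T (x (k+1)) =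
        (1/2 : ℝ) • (x k - T (x k)) + (T (x k) - T (x (k+1))) := by
      have h := hx k
      have : x (k+1) - T (x (k+1)) = (x (k+1) - x k) + (x k - T (x k)) + (T (x k) - T (x (k+1))) := by
        abel
      rw [this, hdiff]; module
    rw [hsplit]
    have h1 : ‖(1/2 : ℝ) • (x k - T (x k))‖ = (1/2) * ‖x k - T (x k)‖ := by
      rw [norm_smul, Real.norm_eq_abs]; norm_num
    have h2 : ‖T (x k) - T (x (k+1))‖ ≤ ‖x k - x (k+1)‖ := hT _ _
    have h3 : ‖x k - x (k+1)‖ = (1/2) * ‖x k - T (x k)‖ := by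
      have : x k - x (k+1) = (1/2 : ℝ) • (x k - T (x k)) := by
        rw [hx k]; module
      rw [this, norm_smul, Real.norm_eq_abs]; norm_num
    calc ‖(1/2 : ℝ) • (x k - T (x k)) + (T (x k) - T (x (k+1)))‖
        ≤ ‖(1/2 : ℝ) • (x k - T (x k))‖ + ‖T (x k) - T (x (k+1))‖ := norm_add_le _ _
    _ ≤ (1/2) * ‖x k - T (x k)‖ + (1/2) * ‖x k - T (x k)‖ := by
        rw [h1]; rw [h3] at h2; linarith
    _ = ‖x k - T (x k)‖ := by ring
  -- one-step decrease of the potential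
  have onestep : ∀ k : ℕ,
      ‖x (k+1) - xs + (((k:ℝ)+1)/2) • v‖^2
        ≤ ‖x k - xs + ((k:ℝ)/2) • v‖^2 - (1/4)*‖(x k - T (x k)) - v‖^2 := by
    intro k
    set d := x k - xs with hd
    set r := x k - T (x k) with hr
    have hTxk : T (x k) = x k - r := by rw [hr]; abel
    have hid : x (k+1) - xs + (((k:ℝ)+1)/2) • v
        = (d + ((k:ℝ)/2) • v) - (1/2 : ℝ) • (r - v) := by
      rw [hx k, hTxk, hd]; module
    have hrv : r - v = d - (T (x k) - T xs) := by
      rw [hr, hd, ← hxs]; abel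
    have ht : ‖T (x k) - T xs‖ ≤ ‖d‖ := hT _ _
    have firm : ‖r - v‖^2 ≤ 2*⟪d, r - v⟫ := by
      rw [hrv, inner_sub_right, real_inner_self_eq_norm_sq, norm_sub_sq_real]
      have h2 : ⟪d, T (x k) - T xs⟫ ≤ ‖d‖*‖T (x k) - T xs‖ := real_inner_le_norm _ _
      nlinarith [norm_nonneg d, norm_nonneg (T (x k) - T xs)]
    have hkey : ‖v‖^2 ≤ ⟪v, r⟫ := aux_key T hT v xs hv hvmin hxs (x k)
    rw [hid, norm_sub_sq_real]
    have hinner : ⟪d + ((k:ℝ)/2) • v, (1/2 : ℝ) • (r - v)⟫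
        = (1/2)*⟪d, r - v⟫ + ((k:ℝ)/2)*((1/2)*(⟪v, r⟫ - ‖v‖^2)) := by
      simp only [inner_add_left, inner_sub_right, real_inner_smul_left,
        real_inner_smul_right, real_inner_self_eq_norm_sq]
      ring
    have hBnorm : ‖(1/2 : ℝ) • (r - v)‖^2 = (1/4)*‖r - v‖^2 := by
      rw [norm_smul, Real.norm_eq_abs]
      rw [mul_pow]
      norm_num
    rw [hinner, hBnorm]
    have hk0 : (0:ℝ) ≤ (k:ℝ)/2 := by positivity
    nlinarith [mul_le_mul_of_nonneg_left (show (0:ℝ) ≤ (1/2)*(⟪v, r⟫ - ‖v‖^2) by linarith) hk0]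
  -- induction
  have hsq : ∀ k, (‖x k - T (x k)‖ - ‖v‖)^2 ≤ ‖(x k - T (x k)) - v‖^2 := by
    intro k
    have h1 : ‖x k - T (x k)‖ - ‖v‖ ≤ ‖(x k - T (x k)) - v‖ := norm_sub_norm_le _ _
    have h2 : 0 ≤ ‖x k - T (x k)‖ - ‖v‖ := by linarith [hvle k]
    nlinarith
  have hdec : ∀ k, (‖x (k+1) - T (x (k+1))‖ - ‖v‖)^2 ≤ (‖x k - T (x k)‖ - ‖v‖)^2 := by
    intro k
    have h2 : 0 ≤ ‖x (k+1) - T (x (k+1))‖ - ‖v‖ := by linarith [hvle (k+1)]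
    nlinarith [res_mono k]
  have main : ∀ k : ℕ, (((k:ℝ)+1)/4) * (‖x k - T (x k)‖ - ‖v‖)^2
      ≤ ‖x 0 - xs + ((0:ℝ)/2) • v‖^2 - ‖x (k+1) - xs + (((k:ℝ)+1)/2) • v‖^2 := by
    intro k
    induction k with
    | zero =>
      have h0 := onestep 0
      have h1 := hsq 0
      push_cast at h0 ⊢
      linarith
    | succ n ih =>
      have h0 := onestep (n+1)
      have h1 := hsq (n+1)
      have h2 := hdec n
      have h3 : (((n:ℝ)+1)/4) * (‖x (n+1) - T (x (n+1))‖ - ‖v‖)^2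
          ≤ (((n:ℝ)+1)/4) * (‖x n - T (x n)‖ - ‖v‖)^2 :=
        mul_le_mul_of_nonneg_left h2 (by positivity)
      push_cast at h0 ih ⊢
      nlinarith
  intro k
  have hmain := main k
  have hV0 : ‖x 0 - xs + ((0:ℝ)/2) • v‖^2 = ‖x 0 - xs‖^2 := by
    norm_num
  have hVp : (0:ℝ) ≤ ‖x (k+1) - xs + (((k:ℝ)+1)/2) • v‖^2 := by positivity
  rw [hV0] at hmain
  have hk1 : (0:ℝ) < (k:ℝ) + 1 := by positivity
  rw [div_mul_eq_mul_div, le_div_iff₀ hk1]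
  linarith
end

section
/- For the Halpern iteration x^{k+1} = λ_{k+1} x^0 + (1−λ_{k+1}) T x^k with nonexpansive T, the normalized iterate satisfies ‖x^k − x^0‖/θ_k ≤ ‖x^0 − T x^0‖ for all k ≥ 1, where θ_k is defined by θ_0 = 0, θ_{k+1} = (1−λ_{k+1})(1+θ_k). -/
/-- For the Halpern iteration, the normalized iterate is bounded by the initial
fixed-point residual. -/
theorem halpern_normalized_iterate_bound
    {H : Type*} [NormedAddCommGroup H] [InnerProductSpace ℝ H]
    (T : H → H) (hT : Nonexpansive T) (lam : ℕ → ℝ)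
    (hlam : ∀ k, lam k ∈ Set.Ico (0 : ℝ) 1)
    (theta : ℕ → ℝ) (h0 : theta 0 = 0)
    (hrec : ∀ k, theta (k + 1) = (1 - lam (k + 1)) * (1 + theta k))
    (x : ℕ → H)
    (hx : ∀ k, x (k + 1) = lam (k + 1) • x 0 + (1 - lam (k + 1)) • T (x k)) :
    ∀ k : ℕ, 1 ≤ k → ‖x k - x 0‖ / theta k ≤ ‖x 0 - T (x 0)‖ := by
  have hθ : ∀ k, 0 ≤ theta k := by
    intro k
    induction k with
    | zero => simp [h0]
    | succ n ih =>
      rw [hrec]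
      have h1 := (hlam (n+1)).2
      nlinarith
  have key : ∀ k, ‖x k - x 0‖ ≤ theta k * ‖x 0 - T (x 0)‖ := by
    intro k
    induction k with
    | zero => simp [h0]
    | succ n ih =>
      have hl0 := (hlam (n+1)).1
      have hl1 := (hlam (n+1)).2
      have hdiff : x (n+1) - x 0 = (1 - lam (n+1)) • (T (x n) - x 0) := by
        rw [hx n]
        rw [smul_sub, sub_smul, one_smul]
        module
      rw [hdiff, norm_smul, hrec]
      have h1 : ‖T (x n) - x 0‖ ≤ ‖x n - x 0‖ + ‖x 0 - T (x 0)‖ := by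
        calc ‖T (x n) - x 0‖ ≤ ‖T (x n) - T (x 0)‖ + ‖T (x 0) - x 0‖ := norm_sub_le_norm_sub_add_norm_sub _ _ _
        _ ≤ ‖x n - x 0‖ + ‖x 0 - T (x 0)‖ := by
            rw [norm_sub_rev (T (x 0))]
            exact add_le_add (hT _ _) le_rfl
      have h2 : ‖T (x n) - x 0‖ ≤ (1 + theta n) * ‖x 0 - T (x 0)‖ := by nlinarith
      have h3 : ‖(1 - lam (n+1))‖ = 1 - lam (n+1) := by
        rw [Real.norm_eq_abs, abs_of_nonneg]; linarith
      rw [h3, mul_assoc]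
      have h4 : 0 ≤ 1 - lam (n+1) := by linarith
      exact mul_le_mul_of_nonneg_left h2 h4
  intro k _
  rcases eq_or_lt_of_le (hθ k) with h | h
  · rw [← h, div_zero]; positivity
  · rw [div_le_iff₀ h]; linarith [key k]
end

section
/- Let T be nonexpansive with v = x_⋆ − T x_⋆ the infimal displacement vector, and let x^k be the Halpern iteration with λ_k = 1/(k+1). Then ‖2(x^k − x^0)/k + v‖² ≤ (16/k²) ‖x^0 − x_⋆‖² for all k ≥ 1. -/
/-! The heart of the proof is the invariant `‖x^k - x_⋆ + (k/2) v‖ ≤ ‖x^0 - x_⋆‖`. Inductively,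
`x^{k+1} - x_⋆ + ((k+1)/2) v` is the convex combination, with weights `1/(k+2)` and `(k+1)/(k+2)`,
of `x^0 - x_⋆` and `T x^k - x_⋆ + (k/2 + 1) v`, and the latter is no longer than
`x^k - x_⋆ + (k/2) v` because `I - T` is firmly nonexpansive and `⟪(I - T) y - v, v⟫ ≥ 0` for all
`y`. That sign condition is the variational inequality for the minimal-norm point `v` of the
closed set `cl ran (I - T)`, which is convex: a convex combination `c` of values of `I - T` is the
limit of `(I - T) z_ε = c - ε z_ε`, where `z_ε` is the resolvent solution given by Banach's fixed
point theorem and monotonicity of `I - T` forces `ε z_ε → 0`. The rate then follows from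
`(2/k)(x^k - x^0) + v = (2/k)((x^k - x_⋆ + (k/2) v) - (x^0 - x_⋆))`. -/

open Set Filter Topology RealInnerProductSpace

theorem Convex.inner_sub_nonneg_of_forall_norm_le {F : Type*} [NormedAddCommGroup F]
    [InnerProductSpace ℝ F] {K : Set F} (hK : Convex ℝ K) {u v : F} (hv : v ∈ K)
    (hmin : ∀ w ∈ K, ‖v‖ ≤ ‖w‖) (hu : u ∈ K) : 0 ≤ ⟪u - v, v⟫ := by
  have : Nonempty K := ⟨⟨v, hv⟩⟩
  have hinf : ‖0 - v‖ = ⨅ w : K, ‖0 - (w : F)‖ :=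
    le_antisymm (le_ciInf fun w => by simpa using hmin w w.2)
      (ciInf_le (f := fun w : K => ‖0 - (w : F)‖)
        ⟨0, forall_mem_range.2 fun _ => norm_nonneg _⟩ ⟨v, hv⟩)
  have := (norm_eq_iInf_iff_real_inner_le_zero hK hv).1 hinf u hu
  rw [zero_sub, inner_neg_left, real_inner_comm] at this
  linarith

namespace Nonexpansive

variable {H : Type*} [NormedAddCommGroup H] [InnerProductSpace ℝ H] {T : H → H}

theorem norm_sub_sub_sq_le_two_inner (hT : Nonexpansive T) (x y : H) :
    ‖(x - T x) - (y - T y)‖ ^ 2 ≤ 2 * ⟪(x - T x) - (y - T y), x - y⟫ := by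
  have hsq : ‖T x - T y‖ ^ 2 ≤ ‖x - y‖ ^ 2 := pow_le_pow_left₀ (norm_nonneg _) (hT x y) 2
  rw [show T x - T y = (x - y) - ((x - T x) - (y - T y)) by abel, norm_sub_sq_real,
    real_inner_comm] at hsq
  linarith

theorem inner_sub_sub_nonneg (hT : Nonexpansive T) (x y : H) :
    0 ≤ ⟪(x - T x) - (y - T y), x - y⟫ := by
  nlinarith [hT.norm_sub_sub_sq_le_two_inner x y, sq_nonneg ‖(x - T x) - (y - T y)‖]

theorem exists_sub_add_smul_eq [CompleteSpace H] (hT : Nonexpansive T) {ε : ℝ} (hε : 0 < ε)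
    (c : H) : ∃ z, z - T z + ε • z = c := by
  have hpos : 0 < 1 + ε := by linarith
  set F : H → H := fun u => (1 + ε)⁻¹ • (T u + c)
  have hF : ContractingWith ⟨(1 + ε)⁻¹, by positivity⟩ F := by
    refine ⟨show (1 + ε)⁻¹ < 1 from inv_lt_one_of_one_lt₀ (by linarith), ?_⟩
    refine LipschitzWith.of_dist_le_mul fun u w => ?_
    rw [dist_eq_norm, dist_eq_norm, ← smul_sub, add_sub_add_right_eq_sub, norm_smul,
      Real.norm_of_nonneg (by positivity)]
    exact mul_le_mul_of_nonneg_left (hT u w) (by positivity)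
  have : Nonempty H := ⟨0⟩
  set z := ContractingWith.fixedPoint F hF
  refine ⟨z, ?_⟩
  have hz : (1 + ε) • F z = T z + c := by
    simp only [F, smul_smul, mul_inv_cancel₀ hpos.ne', one_smul]
  rw [ContractingWith.fixedPoint_isFixedPt hF, add_smul, one_smul] at hz
  rw [sub_add_eq_add_sub, hz]
  abel

theorem norm_smul_sq_le_of_sub_add_smul_eq (hT : Nonexpansive T) {a b c z : H} {α β ε : ℝ}
    (hα : 0 ≤ α) (hβ : 0 ≤ β) (hαβ : α + β = 1) (hε : 0 ≤ ε)
    (hc : α • (a - T a) + β • (b - T b) = c) (hz : z - T z + ε • z = c) :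
    ‖ε • z‖ ^ 2 ≤ ε ^ 2 * ‖α • a + β • b‖ ^ 2
      + 2 * ε * (α * ⟪(a - T a) - c, a⟫ + β * ⟪(b - T b) - c, b⟫) := by
  obtain rfl : β = 1 - α := by linarith
  have hAz : z - T z = c - ε • z := eq_sub_of_add_eq hz
  have ha := hT.inner_sub_sub_nonneg z a
  have hb := hT.inner_sub_sub_nonneg z b
  rw [hAz] at ha hb
  have hcancel : ⟪α • ((a - T a) - c) + (1 - α) • ((b - T b) - c), z⟫ = 0 := by
    rw [← hc, show α • (a - T a - (α • (a - T a) + (1 - α) • (b - T b)))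
      + (1 - α) • (b - T b - (α • (a - T a) + (1 - α) • (b - T b))) = 0 by module, inner_zero_left]
  have hCS : ⟪ε • z, ε • (α • a + (1 - α) • b)⟫
      ≤ (‖ε • z‖ ^ 2 + ‖ε • (α • a + (1 - α) • b)‖ ^ 2) / 2 := by
    nlinarith [real_inner_le_norm (ε • z) (ε • (α • a + (1 - α) • b)),
      sq_nonneg (‖ε • z‖ - ‖ε • (α • a + (1 - α) • b)‖)]
  simp only [inner_sub_left, inner_sub_right, inner_add_left, inner_add_right,
    real_inner_smul_left, real_inner_smul_right, real_inner_self_eq_norm_sq, norm_smul,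
    Real.norm_eq_abs, mul_pow, sq_abs] at ha hb hcancel hCS ⊢
  have key : ε * ‖z‖ ^ 2 ≤ ε * (α * ⟪z, a⟫ + (1 - α) * ⟪z, b⟫)
      + (α * (‖a‖ ^ 2 - ⟪T a, a⟫ - ⟪c, a⟫) + (1 - α) * (‖b‖ ^ 2 - ⟪T b, b⟫ - ⟪c, b⟫)) := by
    nlinarith [mul_nonneg hα ha, mul_nonneg hβ hb]
  nlinarith [mul_le_mul_of_nonneg_left key hε]

theorem smul_add_smul_mem_closure_range [CompleteSpace H] (hT : Nonexpansive T) (a b : H)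
    {α β : ℝ} (hα : 0 ≤ α) (hβ : 0 ≤ β) (hαβ : α + β = 1) :
    α • (a - T a) + β • (b - T b) ∈ closure (range fun z => z - T z) := by
  set c := α • (a - T a) + β • (b - T b)
  set B := ‖α • a + β • b‖
  set K := α * ⟪(a - T a) - c, a⟫ + β * ⟪(b - T b) - c, b⟫
  choose! z hz using fun ε (hε : 0 < ε) => hT.exists_sub_add_smul_eq hε c
  have hlim : Tendsto (fun ε => √(ε ^ 2 * B ^ 2 + 2 * ε * K)) (𝓝[>] 0) (𝓝 0) :=
    ((by fun_prop : Continuous fun ε : ℝ => √(ε ^ 2 * B ^ 2 + 2 * ε * K)).tendsto' 0 0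
      (by simp)).mono_left nhdsWithin_le_nhds
  refine mem_closure_of_tendsto (f := fun ε => z ε - T (z ε)) (b := 𝓝[>] 0) ?_
    (Eventually.of_forall fun ε => mem_range_self _)
  rw [tendsto_iff_norm_sub_tendsto_zero]
  refine squeeze_zero' (Eventually.of_forall fun _ => norm_nonneg _) ?_ hlim
  filter_upwards [self_mem_nhdsWithin] with ε (hε : 0 < ε)
  rw [← hz ε hε, sub_add_cancel_left, norm_neg]
  exact Real.le_sqrt_of_sq_le <| hT.norm_smul_sq_le_of_sub_add_smul_eq hα hβ hαβ hε.le rfl (hz ε hε)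

theorem convex_closure_range [CompleteSpace H] (hT : Nonexpansive T) :
    Convex ℝ (closure (range fun z => z - T z)) := by
  intro p hp q hq α β hα hβ hαβ
  rw [← closure_closure (s := range _)]
  refine map_mem_closure₂ (f := fun p q => α • p + β • q) (by fun_prop) hp hq ?_
  rintro _ ⟨a, rfl⟩ _ ⟨b, rfl⟩
  exact hT.smul_add_smul_mem_closure_range a b hα hβ hαβ

theorem norm_sub_add_smul_le (hT : Nonexpansive T) {v xs : H}
    (hv : ∀ x, 0 ≤ ⟪(x - T x) - v, v⟫) (hxs : xs - T xs = v) {s : ℝ} (hs : 0 ≤ s) (y : H) :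
    ‖T y - xs + (s + 1) • v‖ ≤ ‖y - xs + s • v‖ := by
  set q := y - xs + s • v
  set e := (y - T y) - v
  have hfirm := hT.norm_sub_sub_sq_le_two_inner y xs
  rw [hxs] at hfirm
  have hqe : ⟪q, e⟫ = ⟪e, y - xs⟫ + s * ⟪e, v⟫ := by
    rw [inner_add_left, real_inner_smul_left, real_inner_comm e, real_inner_comm e]
  have hsq : ‖q - e‖ ^ 2 ≤ ‖q‖ ^ 2 := by
    rw [norm_sub_sq_real, hqe]
    nlinarith [mul_nonneg hs (hv y)]
  rw [show T y - xs + (s + 1) • v = q - e by module]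
  exact pow_le_pow_iff_left₀ (norm_nonneg _) (norm_nonneg _) two_ne_zero |>.1 hsq

theorem norm_halpern_sub_add_smul_le (hT : Nonexpansive T) {v xs : H}
    (hv : ∀ x, 0 ≤ ⟪(x - T x) - v, v⟫) (hxs : xs - T xs = v) (x : ℕ → H)
    (hx : ∀ k : ℕ, x (k + 1) =
      (1 / ((k : ℝ) + 2)) • x 0 + (((k : ℝ) + 1) / ((k : ℝ) + 2)) • T (x k)) (k : ℕ) :
    ‖x k - xs + ((k : ℝ) / 2) • v‖ ≤ ‖x 0 - xs‖ := by
  induction k with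
  | zero => simp
  | succ k ih =>
    have hstep := hT.norm_sub_add_smul_le hv hxs (s := (k : ℝ) / 2) (by positivity) (x k)
    have hconv : x (k + 1) - xs + ((↑(k + 1) : ℝ) / 2) • v = (1 / ((k : ℝ) + 2)) • (x 0 - xs)
        + (((k : ℝ) + 1) / ((k : ℝ) + 2)) • (T (x k) - xs + ((k : ℝ) / 2 + 1) • v) := by
      rw [hx k]
      push_cast
      match_scalars <;> grind
    calc _ ≤ 1 / ((k : ℝ) + 2) * ‖x 0 - xs‖
          + ((k : ℝ) + 1) / ((k : ℝ) + 2) * ‖T (x k) - xs + ((k : ℝ) / 2 + 1) • v‖ := by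
          rw [hconv]
          refine (norm_add_le _ _).trans_eq ?_
          rw [norm_smul, norm_smul, Real.norm_of_nonneg (by positivity),
            Real.norm_of_nonneg (by positivity)]
      _ ≤ 1 / ((k : ℝ) + 2) * ‖x 0 - xs‖ + ((k : ℝ) + 1) / ((k : ℝ) + 2) * ‖x 0 - xs‖ := by
          gcongr
          exact hstep.trans ih
      _ = ‖x 0 - xs‖ := by field_simp; ring

end Nonexpansive

/-- For the Halpern iteration with `λ_k = 1/(k+1)` (OHM), the normalized iterate
`2(x^k - x^0)/k` converges to `-v` at rate `16/k²`. -/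
theorem ohm_normalized_iterate_rate
    {H : Type*} [NormedAddCommGroup H] [InnerProductSpace ℝ H] [CompleteSpace H]
    (T : H → H) (hT : Nonexpansive T) (v xs : H)
    (hv : v ∈ closure (Set.range fun z => z - T z))
    (hvmin : ∀ w ∈ closure (Set.range fun z => z - T z), ‖v‖ ≤ ‖w‖)
    (hxs : xs - T xs = v)
    (x : ℕ → H)
    (hx : ∀ k : ℕ, x (k + 1) =
      (1 / ((k : ℝ) + 2)) • x 0 + (((k : ℝ) + 1) / ((k : ℝ) + 2)) • T (x k)) :
    ∀ k : ℕ, 1 ≤ k →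
      ‖(2 / (k : ℝ)) • (x k - x 0) + v‖ ^ 2 ≤ (16 / (k : ℝ) ^ 2) * ‖x 0 - xs‖ ^ 2 := by
  intro k hk
  have hk₀ : (0 : ℝ) < k := by exact_mod_cast hk
  have hsign (y : H) : 0 ≤ ⟪(y - T y) - v, v⟫ :=
    hT.convex_closure_range.inner_sub_nonneg_of_forall_norm_le hv hvmin
      (subset_closure (mem_range_self y))
  have hinv := hT.norm_halpern_sub_add_smul_le hsign hxs x hx k
  have hbound : ‖(2 / (k : ℝ)) • (x k - x 0) + v‖ ≤ 4 / k * ‖x 0 - xs‖ :=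
    calc _ = ‖(2 / (k : ℝ)) • ((x k - xs + ((k : ℝ) / 2) • v) - (x 0 - xs))‖ := by
          congr 1
          match_scalars <;> grind
      _ = 2 / (k : ℝ) * ‖(x k - xs + ((k : ℝ) / 2) • v) - (x 0 - xs)‖ := by
          rw [norm_smul, Real.norm_of_nonneg (by positivity)]
      _ ≤ 2 / (k : ℝ) * (‖x 0 - xs‖ + ‖x 0 - xs‖) := by
          gcongr
          exact (norm_sub_le _ _).trans (by gcongr)
      _ = 4 / k * ‖x 0 - xs‖ := by ring
  calc _ ≤ (4 / k * ‖x 0 - xs‖) ^ 2 := by gcongr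
    _ = _ := by ring
end

section
/- For the Halpern iteration with λ_k = 1/(k+1) and nonexpansive T, the quantity V_k := (k+1)[k‖x^k − T x^k‖² + 2⟨x^k − T x^k, x^k − x^0⟩] is nonincreasing in k; in particular k‖x^k − T x^k‖² + 2⟨x^k − T x^k, x^k − x^0⟩ ≤ 0 and hence ‖x^k − T x^k‖ ≤ (2/k)‖x^k − x^0‖ for all k ≥ 1. -/
set_option maxHeartbeats 2000000
open scoped RealInnerProductSpace

lemma ohm_key {H : Type*} [NormedAddCommGroup H] [InnerProductSpace ℝ H]
    (p a ta tb : H) (c : ℝ) (hc : c + 2 ≠ 0) :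
    (c+2)*((c+1)*‖((1/(c+2)) • p + ((c+1)/(c+2)) • ta) - tb‖^2
        + 2*⟪((1/(c+2)) • p + ((c+1)/(c+2)) • ta) - tb, ((1/(c+2)) • p + ((c+1)/(c+2)) • ta) - p⟫)
      - (c+1)*(c*‖a - ta‖^2 + 2*⟪a - ta, a - p⟫)
    = (c+1)*(c+2)*(‖tb - ta‖^2 - ‖((1/(c+2)) • p + ((c+1)/(c+2)) • ta) - a‖^2) := by
  simp only [← real_inner_self_eq_norm_sq, inner_sub_left, inner_sub_right,
    inner_add_left, inner_add_right, real_inner_smul_left, real_inner_smul_right]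
  rw [real_inner_comm p ta, real_inner_comm p tb, real_inner_comm p a,
    real_inner_comm a ta, real_inner_comm ta tb]
  field_simp
  ring

/-- For the Halpern (OHM) iteration with `λ_k = 1/(k+1)`, the potential
`V_k = (k+1)[k‖x^k - Tx^k‖² + 2⟨x^k - Tx^k, x^k - x^0⟩]` is nonincreasing; in particular
`k‖x^k - Tx^k‖² + 2⟨x^k - Tx^k, x^k - x^0⟩ ≤ 0` and `‖x^k - Tx^k‖ ≤ (2/k)‖x^k - x^0‖`. -/
theorem ohm_potential_nonincreasing
    {H : Type*} [NormedAddCommGroup H] [InnerProductSpace ℝ H]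
    (T : H → H) (hT : Nonexpansive T)
    (x : ℕ → H)
    (hx : ∀ k : ℕ, x (k + 1) =
      (1 / ((k : ℝ) + 2)) • x 0 + (((k : ℝ) + 1) / ((k : ℝ) + 2)) • T (x k)) :
    (∀ k : ℕ,
      ((k : ℝ) + 2) * (((k : ℝ) + 1) * ‖x (k + 1) - T (x (k + 1))‖ ^ 2 +
        2 * ⟪x (k + 1) - T (x (k + 1)), x (k + 1) - x 0⟫) ≤
      ((k : ℝ) + 1) * ((k : ℝ) * ‖x k - T (x k)‖ ^ 2 +
        2 * ⟪x k - T (x k), x k - x 0⟫)) ∧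
    (∀ k : ℕ, 1 ≤ k →
      (k : ℝ) * ‖x k - T (x k)‖ ^ 2 + 2 * ⟪x k - T (x k), x k - x 0⟫ ≤ 0) ∧
    (∀ k : ℕ, 1 ≤ k → ‖x k - T (x k)‖ ≤ (2 / (k : ℝ)) * ‖x k - x 0‖) := by
  have hmono : ∀ k : ℕ,
      ((k : ℝ) + 2) * (((k : ℝ) + 1) * ‖x (k + 1) - T (x (k + 1))‖ ^ 2 +
        2 * ⟪x (k + 1) - T (x (k + 1)), x (k + 1) - x 0⟫) ≤
      ((k : ℝ) + 1) * ((k : ℝ) * ‖x k - T (x k)‖ ^ 2 +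
        2 * ⟪x k - T (x k), x k - x 0⟫) := by
    intro k
    have hc0 : (0:ℝ) ≤ (k:ℝ) := Nat.cast_nonneg k
    have hc : (k:ℝ) + 2 ≠ 0 := by positivity
    have hid := ohm_key (x 0) (x k) (T (x k)) (T (x (k+1))) (k:ℝ) hc
    rw [← hx k] at hid
    have hne : ‖T (x (k+1)) - T (x k)‖ ≤ ‖x (k+1) - x k‖ := hT _ _
    have hne2 : ‖T (x (k+1)) - T (x k)‖^2 ≤ ‖x (k+1) - x k‖^2 := by
      have := norm_nonneg (T (x (k+1)) - T (x k))
      nlinarith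
    nlinarith [hid, mul_pos (by linarith : (0:ℝ) < (k:ℝ) + 1)
      (by linarith : (0:ℝ) < (k:ℝ) + 2)]
  have hV : ∀ m : ℕ, ((m : ℝ) + 1) * ((m : ℝ) * ‖x m - T (x m)‖ ^ 2 +
      2 * ⟪x m - T (x m), x m - x 0⟫) ≤ 0 := by
    intro m
    induction m with
    | zero => simp
    | succ n ih =>
      have := hmono n
      push_cast
      linarith
  have hbr : ∀ k : ℕ, 1 ≤ k →
      (k : ℝ) * ‖x k - T (x k)‖ ^ 2 + 2 * ⟪x k - T (x k), x k - x 0⟫ ≤ 0 := by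
    intro k hk
    have h := hV k
    have hpos : (0:ℝ) < (k:ℝ) + 1 := by positivity
    nlinarith
  refine ⟨hmono, hbr, ?_⟩
  intro k hk
  have hcs : -(‖x k - T (x k)‖ * ‖x k - x 0‖) ≤ ⟪x k - T (x k), x k - x 0⟫ := by
    have h1 := abs_real_inner_le_norm (x k - T (x k)) (x k - x 0)
    have h2 := abs_le.mp h1
    linarith [h2.1]
  have hk1 : (1:ℝ) ≤ (k:ℝ) := by exact_mod_cast hk
  have hg : (k:ℝ) * ‖x k - T (x k)‖^2 ≤ 2 * (‖x k - T (x k)‖ * ‖x k - x 0‖) := by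
    have := hbr k hk
    linarith
  rcases eq_or_lt_of_le (norm_nonneg (x k - T (x k))) with h0 | h0
  · rw [← h0]
    positivity
  · rw [div_mul_eq_mul_div, le_div_iff₀ (by linarith : (0:ℝ) < (k:ℝ))]
    have hmul := mul_le_mul_of_nonneg_left hg (le_of_lt (inv_pos.mpr h0))
    rw [pow_two] at hmul
    calc ‖x k - T (x k)‖ * (k:ℝ)
        = ‖x k - T (x k)‖⁻¹ * ((k:ℝ) * (‖x k - T (x k)‖ * ‖x k - T (x k)‖)) := by
          field_simp
      _ ≤ ‖x k - T (x k)‖⁻¹ * (2 * (‖x k - T (x k)‖ * ‖x k - x 0‖)) := hmul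
      _ = 2 * ‖x k - x 0‖ := by field_simp
end

section
/- If T : H → H is an affine nonexpansive operator, then the fixed-point residual x^k − T x^k of the Halpern iteration with λ_k = 1/(k+1) equals the negative normalized iterate −(y^{k+1} − y^0)/(k+1) of the Picard iteration y^{k+1} = T y^k started at the same point y^0 = x^0; equivalently the Halpern iterate satisfies x^k = (1/(k+1)) Σ_{i=0}^k T^i x^0. -/
/-- If `T` is affine and nonexpansive, the fixed-point residual of the Halpern iteration
with `λ_k = 1/(k+1)` equals the negative normalized iterate of the Picard iteration started
at the same point; equivalently the Halpern iterate is the Cesàro average of the Picard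
orbit. -/
theorem halpern_affine_equals_picard_normalized
    {H : Type*} [NormedAddCommGroup H] [InnerProductSpace ℝ H]
    (T : H → H) (A : H →ₗ[ℝ] H) (b : H) (hTaff : ∀ z, T z = A z + b)
    (hT : Nonexpansive T)
    (x y : ℕ → H)
    (hx : ∀ k : ℕ, x (k + 1) =
      (1 / ((k : ℝ) + 2)) • x 0 + (((k : ℝ) + 1) / ((k : ℝ) + 2)) • T (x k))
    (hy : ∀ k : ℕ, y (k + 1) = T (y k)) (h0 : y 0 = x 0) :
    ∀ k : ℕ,
      x k - T (x k) = -((1 / ((k : ℝ) + 1)) • (y (k + 1) - y 0)) ∧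
      x k = (1 / ((k : ℝ) + 1)) • ∑ i ∈ Finset.range (k + 1), T^[i] (x 0) := by
  have hY : ∀ k, y k = T^[k] (x 0) := by
    intro k
    induction k with
    | zero => simpa using h0
    | succ n ih => rw [hy, ih, Function.iterate_succ_apply']
  have hAb : ∀ i : ℕ, A (T^[i] (x 0)) = T^[i + 1] (x 0) - b := by
    intro i
    rw [Function.iterate_succ_apply', hTaff]
    abel
  -- If x n is the Cesàro average, then T (x n) is the shifted Cesàro average.
  have hTx : ∀ n : ℕ,
      x n = (1 / ((n : ℝ) + 1)) • ∑ i ∈ Finset.range (n + 1), T^[i] (x 0) →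
      T (x n) = (1 / ((n : ℝ) + 1)) • ∑ i ∈ Finset.range (n + 1), T^[i + 1] (x 0) := by
    intro n hn
    have hn1 : ((n : ℝ) + 1) ≠ 0 := by positivity
    rw [hn, hTaff, map_smul, map_sum]
    simp only [hAb]
    rw [Finset.sum_sub_distrib, Finset.sum_const, Finset.card_range, smul_sub]
    have : (1 / ((n : ℝ) + 1)) • ((n + 1) • b) = b := by
      rw [← Nat.cast_smul_eq_nsmul ℝ, smul_smul]
      push_cast
      rw [one_div_mul_cancel hn1, one_smul]
    rw [this]
    abel
  have hxk : ∀ k : ℕ,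
      x k = (1 / ((k : ℝ) + 1)) • ∑ i ∈ Finset.range (k + 1), T^[i] (x 0) := by
    intro k
    induction k with
    | zero => simp
    | succ n ih =>
      have hn1 : ((n : ℝ) + 1) ≠ 0 := by positivity
      have hn2 : ((n : ℝ) + 2) ≠ 0 := by positivity
      rw [hx n, hTx n ih, smul_smul]
      have hc : ((n : ℝ) + 1) / ((n : ℝ) + 2) * (1 / ((n : ℝ) + 1)) = 1 / ((n : ℝ) + 2) := by
        field_simp
      rw [hc, Finset.sum_range_succ' (fun i => T^[i] (x 0)) (n + 1)]
      simp only [Function.iterate_zero_apply]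
      push_cast
      rw [smul_add]
      module
  intro k
  refine ⟨?_, hxk k⟩
  have hk1 : ((k : ℝ) + 1) ≠ 0 := by positivity
  rw [hTx k (hxk k), hxk k, hY (k + 1), h0, ← smul_sub, ← smul_neg]
  congr 1
  conv_lhs => rw [Finset.sum_range_succ' (fun i => T^[i] (x 0)) k,
    Finset.sum_range_succ (fun i => T^[i + 1] (x 0)) k]
  simp only [Function.iterate_zero_apply]
  abel
end

section
/- Let {(x_i, y_i)}_{i∈I} ⊂ H × H satisfy ‖y_i − y_j‖ ≤ ‖x_i − x_j‖ for all i, j ∈ I, suppose there is a distinguished index ⋆ ∈ I with v := x_⋆ − y_⋆ and ⟨x_i − y_i, v⟩ ≥ ‖v‖² for all i ∈ I. Then there exists a nonexpansive operator T̃ : H → H with T̃ x_i = y_i for all i ∈ I whose infimal displacement vector equals v. -/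
/-!
Put `g i = (x i - y i - v) / 2`. Nonexpansiveness of the data says exactly that `x i ↦ g i` is
firmly nonexpansive, and `hproj` says that every `g i` lies in the closed half-space
`K = {u | 0 ≤ ⟪v, u⟫}`. A firmly nonexpansive extension `G : H → H` of `g` with values in `K` gives
the nonexpansive interpolant `T = id - v - 2 G`; its displacements `v + 2 G z` lie in
`{w | ‖v‖ ^ 2 ≤ ⟪v, w⟫}`, a closed set whose element of least norm is `v = x ⋆ - T (x ⋆)`.

By Zorn's lemma the extension reduces to adding one point `z`, i.e. to finding `y ∈ K` with
`‖y - b‖ ^ 2 ≤ ⟪z - a, y - b⟫` for every pair `(a, b)` of the data: a common point where a family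
of quadratics `‖y‖ ^ 2 + (affine)` is nonpositive. For a finite convex combination of these
quadratics, the same combination of the `b`'s is such a point; this is where firmness enters.
A minimax argument passes from convex combinations to all constraints at once: by strong convexity
the minimizers over `K` of near-maximal combinations form a Cauchy family, and its limit satisfies
every constraint.
-/

open scoped RealInnerProductSpace
open Filter Topology

section FirmExtension

variable {H : Type*} [NormedAddCommGroup H] [InnerProductSpace ℝ H]

section WeightedSums

variable {ι : Type*} [Fintype ι] {w : ι → ℝ}

theorem sum_mul_inner_sub_sum_smul (hw : ∑ i, w i = 1) (u v : ι → H) (p : H) :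
    ∑ i, w i * ⟪u i - p, v i - ∑ j, w j • v j⟫
      = 2⁻¹ * ∑ i, ∑ j, w i * w j * ⟪u i - u j, v i - v j⟫ := by
  have hswap : ∑ i, ∑ j, w i * w j * ⟪u j, v i⟫ = ∑ i, ∑ j, w i * w j * ⟪u i, v j⟫ := by
    rw [Finset.sum_comm]
    exact Finset.sum_congr rfl fun i _ => Finset.sum_congr rfl fun j _ => by ring
  simp only [inner_sub_left, inner_sub_right, inner_sum, real_inner_smul_right, mul_sub,
    Finset.sum_sub_distrib, hswap]
  simp only [mul_assoc, ← Finset.mul_sum, ← Finset.sum_mul, hw, one_mul]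
  ring

theorem sum_mul_norm_sq_sub_inner_nonpos (hw₀ : ∀ i, 0 ≤ w i) (hw₁ : ∑ i, w i = 1) {a b : ι → H}
    (hab : ∀ i j, ‖b i - b j‖ ^ 2 ≤ ⟪a i - a j, b i - b j⟫) (z : H) :
    ∑ i, w i * (‖∑ j, w j • b j - b i‖ ^ 2 - ⟪z - a i, ∑ j, w j • b j - b i⟫) ≤ 0 := by
  have hterm : ∀ i, ‖∑ j, w j • b j - b i‖ ^ 2 - ⟪z - a i, ∑ j, w j • b j - b i⟫
      = ⟪(b i - a i) - (∑ j, w j • b j - z), b i - ∑ j, w j • b j⟫ := fun i => by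
    rw [← real_inner_self_eq_norm_sq]
    simp only [inner_sub_left, inner_sub_right, real_inner_comm]
    ring
  simp only [hterm, sum_mul_inner_sub_sum_smul hw₁]
  refine mul_nonpos_of_nonneg_of_nonpos (by norm_num) <|
    Finset.sum_nonpos fun i _ => Finset.sum_nonpos fun j _ => ?_
  refine mul_nonpos_of_nonneg_of_nonpos (mul_nonneg (hw₀ i) (hw₀ j)) ?_
  have := hab i j
  rw [← real_inner_self_eq_norm_sq] at this
  rw [sub_sub_sub_comm, inner_sub_left]
  linarith

end WeightedSums

section QuadraticFunctions

-- The parameter enters affinely, so convex combinations of parameters give convex combinations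
-- of functions.
def quadFn (c : H × ℝ) (y : H) : ℝ := ‖y‖ ^ 2 - 2 * ⟪c.1, y⟫ + c.2

theorem quadFn_eq (c : H × ℝ) (y : H) : quadFn c y = ‖y - c.1‖ ^ 2 + (c.2 - ‖c.1‖ ^ 2) := by
  rw [quadFn, norm_sub_sq_real, real_inner_comm]; ring

theorem quadFn_smul_add_smul (c d : H × ℝ) (s t : ℝ) (hst : s + t = 1) (y : H) :
    quadFn (s • c + t • d) y = s * quadFn c y + t * quadFn d y := by
  simp only [quadFn, Prod.fst_add, Prod.snd_add, Prod.smul_fst, Prod.smul_snd, inner_add_left,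
    real_inner_smul_left, smul_eq_mul]
  linear_combination (‖y‖ ^ 2) * hst.symm

theorem quadFn_sum_smul {ι : Type*} [Fintype ι] {w : ι → ℝ} (hw : ∑ i, w i = 1) (c : ι → H × ℝ)
    (y : H) : quadFn (∑ i, w i • c i) y = ∑ i, w i * quadFn (c i) y := by
  simp only [quadFn, Prod.fst_sum, Prod.snd_sum, Prod.smul_fst, Prod.smul_snd, sum_inner,
    real_inner_smul_left, smul_eq_mul, mul_add, mul_sub, Finset.sum_add_distrib,
    Finset.sum_sub_distrib, ← Finset.sum_mul, hw, Finset.mul_sum]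
  ring_nf

theorem continuous_quadFn (c : H × ℝ) : Continuous (quadFn c) := by
  unfold quadFn; fun_prop

variable [CompleteSpace H] {K : Set H}

theorem exists_quadFn_add_norm_sub_sq_le (hK : IsClosed K) (hKc : Convex ℝ K) (hKne : K.Nonempty)
    (c : H × ℝ) : ∃ y ∈ K, ∀ w ∈ K, quadFn c y + ‖w - y‖ ^ 2 ≤ quadFn c w := by
  obtain ⟨y, hyK, hy⟩ := exists_norm_eq_iInf_of_complete_convex hKne hK.isComplete hKc c.1
  have hvi := (norm_eq_iInf_iff_real_inner_le_zero hKc hyK).1 hy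
  refine ⟨y, hyK, fun w hw => ?_⟩
  have := hvi w hw
  have hsplit : w - c.1 = (w - y) + (y - c.1) := by abel
  rw [quadFn_eq, quadFn_eq, hsplit, norm_add_sq_real, ← neg_sub c.1 y, inner_neg_right]
  rw [real_inner_comm] at this
  linarith

end QuadraticFunctions

theorem exists_tendsto_of_dist_sq_le {X α : Type*} [PseudoMetricSpace X] [CompleteSpace X]
    {L : Filter α} [L.NeBot] {u : α → X} {ε : α → ℝ} (hε : Tendsto ε L (𝓝 0))
    (hu : ∀ a b, dist (u a) (u b) ^ 2 ≤ ε a + ε b) : ∃ y, Tendsto u L (𝓝 y) := by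
  refine CompleteSpace.complete (Metric.cauchy_iff.2 ⟨inferInstance, fun δ hδ => ?_⟩)
  refine ⟨u '' {a | ε a < δ ^ 2 / 2}, image_mem_map (hε (Iio_mem_nhds (by positivity))), ?_⟩
  rintro _ ⟨a, ha, rfl⟩ _ ⟨b, hb, rfl⟩
  have : dist (u a) (u b) ^ 2 < δ ^ 2 := by linarith [hu a b, ha.out, hb.out]
  exact lt_of_pow_lt_pow_left₀ 2 hδ.le this

section Minimax

variable {K : Set H} {C : Set (H × ℝ)} {Y : H × ℝ → H} {M : ℝ}

section Minimizers

variable (hYK : ∀ c, Y c ∈ K) (hY : ∀ c, ∀ w ∈ K, quadFn c (Y c) + ‖w - Y c‖ ^ 2 ≤ quadFn c w)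
include hYK hY

theorem quadFn_minimizer_smul_add_smul_ge (c d : H × ℝ) {s t : ℝ} (hs : 0 ≤ s) (hst : s + t = 1) :
    s * (quadFn c (Y c) + ‖Y (s • c + t • d) - Y c‖ ^ 2) + t * quadFn d (Y (s • c + t • d))
      ≤ quadFn (s • c + t • d) (Y (s • c + t • d)) := by
  rw [quadFn_smul_add_smul c d s t hst]
  linarith [mul_le_mul_of_nonneg_left (hY c _ (hYK (s • c + t • d))) hs]

variable (hC : Convex ℝ C) (hM : ∀ c ∈ C, quadFn c (Y c) ≤ M)
include hC hM

theorem dist_minimizers_sq_le {c d : H × ℝ} (hc : c ∈ C) (hd : d ∈ C) :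
    dist (Y c) (Y d) ^ 2 ≤ 2 * (M - quadFn c (Y c)) + 2 * (M - quadFn d (Y d)) := by
  have h₁ := quadFn_minimizer_smul_add_smul_ge hYK hY c d (s := 2⁻¹) (t := 2⁻¹) (by norm_num)
    (by norm_num)
  set m := (2⁻¹ : ℝ) • c + (2⁻¹ : ℝ) • d
  have h₂ := hY d (Y m) (hYK m)
  have h₃ := hM m (hC hc hd (by norm_num) (by norm_num) (by norm_num))
  have h₄ := parallelogram_law_with_norm ℝ (Y m - Y c) (Y m - Y d)
  rw [dist_eq_norm, show Y c - Y d = (Y m - Y d) - (Y m - Y c) by abel, norm_sub_rev]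
  linarith [sq_nonneg ‖Y m - Y c + (Y m - Y d)‖]

theorem quadFn_le_of_tendsto_maximizing
    (hMsup : ∀ δ > 0, ∃ c ∈ C, M - δ < quadFn c (Y c)) {y : H}
    (hy : Tendsto (fun c : C => Y c) (comap (fun c : C => quadFn c (Y c)) (𝓝 M)) (𝓝 y))
    {d : H × ℝ} (hd : d ∈ C) : quadFn d y ≤ M := by
  set t : ℕ → ℝ := fun k => 1 / ((k : ℝ) + 1)
  have ht : Tendsto t atTop (𝓝 0) := tendsto_one_div_add_atTop_nhds_zero_nat
  have ht₀ : ∀ k, 0 < t k := fun k => by positivity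
  have ht₁ : ∀ k, t k ≤ 1 := fun k => div_le_one_of_le₀ (by linarith [k.cast_nonneg (α := ℝ)])
    (by positivity)
  choose c hc hct using fun k => hMsup (t k ^ 2) (by positivity)
  -- Mixing the weight `t` of `d` into a `t ^ 2`-maximizer gives a near-maximizer at whose
  -- minimizer `quadFn d` is at most `M + t`.
  set e : ℕ → C := fun k =>
    ⟨(1 - t k) • c k + t k • d, hC (hc k) hd (by linarith [ht₁ k]) (ht₀ k).le (by ring)⟩
  have hmixed : ∀ k, (1 - t k) * (M - t k ^ 2) + t k * quadFn d (Y (e k))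
      ≤ quadFn (e k) (Y (e k)) := fun k => by
    have := quadFn_minimizer_smul_add_smul_ge hYK hY (c k) d (by linarith [ht₁ k])
      (sub_add_cancel 1 (t k))
    have := mul_le_mul_of_nonneg_left
      (show M - t k ^ 2 ≤ quadFn (c k) (Y (c k)) + ‖Y (e k) - Y (c k)‖ ^ 2 by
        linarith [hct k, sq_nonneg ‖Y (e k) - Y (c k)‖]) (sub_nonneg.2 (ht₁ k))
    linarith
  have hupper : ∀ k, quadFn d (Y (e k)) ≤ M + t k := fun k => by
    refine le_of_mul_le_mul_left ?_ (ht₀ k)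
    nlinarith [hmixed k, hM _ (e k).2, ht₀ k, ht₁ k]
  have hmax : Tendsto (fun k => quadFn (e k) (Y (e k))) atTop (𝓝 M) := by
    have hlow : Tendsto (fun k => M - (t k ^ 2 + t k * (M - quadFn d (Y d)))) atTop (𝓝 M) := by
      simpa using tendsto_const_nhds.sub ((ht.pow 2).add (ht.mul_const _))
    refine tendsto_of_tendsto_of_tendsto_of_le_of_le hlow tendsto_const_nhds (fun k => ?_)
      (fun k => hM _ (e k).2)
    have := mul_le_mul_of_nonneg_left
      (show quadFn d (Y d) ≤ quadFn d (Y (e k)) by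
        linarith [hY d (Y (e k)) (hYK _), sq_nonneg ‖Y (e k) - Y d‖]) (ht₀ k).le
    nlinarith [hmixed k, ht₀ k]
  have hlim : Tendsto (fun k => Y (e k)) atTop (𝓝 y) := hy.comp (tendsto_comap_iff.2 hmax)
  exact le_of_tendsto_of_tendsto' (((continuous_quadFn d).tendsto y).comp hlim)
    (by simpa using tendsto_const_nhds.add ht) hupper

end Minimizers

variable [CompleteSpace H]

theorem exists_forall_quadFn_nonpos (hK : IsClosed K) (hKc : Convex ℝ K) (hC : Convex ℝ C)
    (hCne : C.Nonempty) (h : ∀ c ∈ C, ∃ y ∈ K, quadFn c y ≤ 0) :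
    ∃ y ∈ K, ∀ c ∈ C, quadFn c y ≤ 0 := by
  have : Nonempty C := hCne.to_subtype
  have hKne : K.Nonempty := let ⟨y, hy, _⟩ := h _ hCne.some_mem; ⟨y, hy⟩
  choose Y hYK hY using exists_quadFn_add_norm_sub_sq_le hK hKc hKne
  set φ : C → ℝ := fun c => quadFn c (Y c)
  have hφ₀ : ∀ c, φ c ≤ 0 := fun c => by
    obtain ⟨y, hyK, hy⟩ := h c c.2
    linarith [hY c y hyK, sq_nonneg ‖y - Y c‖]
  set M := ⨆ c, φ c
  have hM : ∀ c, φ c ≤ M := le_ciSup ⟨0, Set.forall_mem_range.2 hφ₀⟩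
  have hMsup : ∀ δ > 0, ∃ c, M - δ < φ c := fun δ hδ => exists_lt_of_lt_ciSup (sub_lt_self _ hδ)
  have : (comap φ (𝓝 M)).NeBot := by
    refine comap_neBot fun t ht => ?_
    obtain ⟨δ, hδ, hball⟩ := Metric.mem_nhds_iff.1 ht
    obtain ⟨c, hc⟩ := hMsup δ hδ
    refine ⟨c, hball ?_⟩
    rw [Metric.mem_ball, Real.dist_eq, abs_sub_lt_iff]
    constructor <;> linarith [hM c]
  have hε : Tendsto (fun c => 2 * (M - φ c)) (comap φ (𝓝 M)) (𝓝 0) := by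
    have := ((tendsto_const_nhds (x := M)).sub (tendsto_comap (f := φ) (x := 𝓝 M))).const_mul 2
    simpa using this
  obtain ⟨y, hy⟩ := exists_tendsto_of_dist_sq_le (u := fun c : C => Y c) hε
    fun c d => dist_minimizers_sq_le hYK hY hC (fun c hc => hM ⟨c, hc⟩) c.2 d.2
  refine ⟨y, hK.mem_of_tendsto hy (Eventually.of_forall fun c => hYK c), fun d hd => ?_⟩
  exact (quadFn_le_of_tendsto_maximizing hYK hY hC (fun c hc => hM ⟨c, hc⟩)
    (fun δ hδ => let ⟨c, hc⟩ := hMsup δ hδ; ⟨c, c.2, hc⟩) hy hd).trans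
    (ciSup_le hφ₀)

end Minimax

def IsFirmlyNonexpansive (R : Set (H × H)) : Prop :=
  ∀ p ∈ R, ∀ q ∈ R, ‖p.2 - q.2‖ ^ 2 ≤ ⟪p.1 - q.1, p.2 - q.2⟫

namespace IsFirmlyNonexpansive

variable {R : Set (H × H)}

theorem eq_of_mem (hR : IsFirmlyNonexpansive R) {z y y' : H} (hy : (z, y) ∈ R)
    (hy' : (z, y') ∈ R) : y = y' := by
  have := hR _ hy _ hy'
  rw [sub_self, inner_zero_left] at this
  exact sub_eq_zero.1 (norm_eq_zero.1 (pow_eq_zero_iff two_ne_zero |>.1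
    (le_antisymm this (sq_nonneg _))))

theorem sUnion {c : Set (Set (H × H))} (hc : IsChain (· ⊆ ·) c)
    (h : ∀ R ∈ c, IsFirmlyNonexpansive R) : IsFirmlyNonexpansive (⋃₀ c) := by
  rintro p ⟨R, hRc, hpR⟩ q ⟨R', hR'c, hqR'⟩
  rcases hc.total hRc hR'c with hRR' | hR'R
  · exact h R' hR'c p (hRR' hpR) q hqR'
  · exact h R hRc p hpR q (hR'R hqR')

theorem insert (hR : IsFirmlyNonexpansive R) {z y : H}
    (h : ∀ p ∈ R, ‖y - p.2‖ ^ 2 ≤ ⟪z - p.1, y - p.2⟫) : IsFirmlyNonexpansive (insert (z, y) R) := by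
  have h' : ∀ p ∈ R, ‖p.2 - y‖ ^ 2 ≤ ⟪p.1 - z, p.2 - y⟫ := fun p hp => by
    rw [norm_sub_rev, ← inner_neg_neg, neg_sub, neg_sub]
    exact h p hp
  rintro p (rfl | hp) q (rfl | hq)
  exacts [by simp, h q hq, h' p hp, hR p hp q hq]

variable [CompleteSpace H] {K : Set H}

theorem exists_insert (hR : IsFirmlyNonexpansive R) (hRne : R.Nonempty) (hK : IsClosed K)
    (hKc : Convex ℝ K) (hRK : ∀ p ∈ R, p.2 ∈ K) (z : H) :
    ∃ y ∈ K, ∀ p ∈ R, ‖y - p.2‖ ^ 2 ≤ ⟪z - p.1, y - p.2⟫ := by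
  set f : H × H → H × ℝ := fun p => (p.2 + (2⁻¹ : ℝ) • (z - p.1), ‖p.2‖ ^ 2 + ⟪z - p.1, p.2⟫)
  have hf : ∀ p y, quadFn (f p) y = ‖y - p.2‖ ^ 2 - ⟪z - p.1, y - p.2⟫ := fun p y => by
    simp only [f, quadFn, inner_add_right, real_inner_smul_right, inner_sub_left, inner_sub_right,
      norm_sub_sq_real, real_inner_comm y]
    ring
  obtain ⟨y, hyK, hy⟩ := exists_forall_quadFn_nonpos hK hKc (convex_convexHull ℝ (f '' R))
    (hRne.image f).convexHull fun c hc => by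
      obtain ⟨ι, _, w, c', hw₀, hw₁, hc'R, rfl⟩ := mem_convexHull_iff_exists_fintype.1 hc
      choose p hpR hpc using hc'R
      refine ⟨∑ i, w i • (p i).2, hKc.sum_mem (fun i _ => hw₀ i) hw₁ fun i _ => hRK _ (hpR i), ?_⟩
      simp only [← hpc, quadFn_sum_smul hw₁, hf]
      exact sum_mul_norm_sq_sub_inner_nonpos hw₀ hw₁ (fun i j => hR _ (hpR i) _ (hpR j)) z
  exact ⟨y, hyK, fun p hp => by
    simpa [hf] using hy (f p) (subset_convexHull ℝ _ (Set.mem_image_of_mem f hp))⟩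

theorem exists_extension (hR : IsFirmlyNonexpansive R) (hRne : R.Nonempty) (hK : IsClosed K)
    (hKc : Convex ℝ K) (hRK : ∀ p ∈ R, p.2 ∈ K) :
    ∃ G : H → H, (∀ z w, ‖G z - G w‖ ^ 2 ≤ ⟪z - w, G z - G w⟫) ∧ (∀ p ∈ R, G p.1 = p.2) ∧
      ∀ z, G z ∈ K := by
  obtain ⟨R', hRR', hmax⟩ := zorn_subset_nonempty
    {R' : Set (H × H) | IsFirmlyNonexpansive R' ∧ ∀ p ∈ R', p.2 ∈ K}
    (fun c hcS hc _ => ⟨⋃₀ c, ⟨sUnion hc fun R' hR' => (hcS hR').1,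
      fun p ⟨R', hR'c, hpR'⟩ => (hcS hR'c).2 p hpR'⟩, fun _ => Set.subset_sUnion_of_mem⟩)
    R ⟨hR, hRK⟩
  obtain ⟨hR'firm, hR'K⟩ := hmax.prop
  have htotal : ∀ z, ∃ y, (z, y) ∈ R' := fun z => by
    obtain ⟨y, hyK, hy⟩ := hR'firm.exists_insert (hRne.mono hRR') hK hKc hR'K z
    refine ⟨y, hmax.mem_of_prop_insert ⟨hR'firm.insert hy, ?_⟩⟩
    rintro p (rfl | hp)
    exacts [hyK, hR'K p hp]
  choose G hG using htotal
  exact ⟨G, fun z w => hR'firm _ (hG z) _ (hG w),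
    fun p hp => hR'firm.eq_of_mem (hG p.1) (hRR' hp), fun z => hR'K _ (hG z)⟩

end IsFirmlyNonexpansive

theorem norm_two_smul_sub_le_iff (u p : H) : ‖(2 : ℝ) • u - p‖ ≤ ‖p‖ ↔ ‖u‖ ^ 2 ≤ ⟪p, u⟫ := by
  rw [← sq_le_sq₀ (norm_nonneg _) (norm_nonneg _), norm_sub_sq_real, norm_smul,
    real_inner_smul_left, real_inner_comm]
  norm_num
  constructor <;> intro h <;> nlinarith

theorem norm_le_of_sq_le_inner {v w : H} (h : ‖v‖ ^ 2 ≤ ⟪v, w⟫) : ‖v‖ ≤ ‖w‖ := by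
  rcases (norm_nonneg v).eq_or_lt with hv | hv
  · exact hv ▸ norm_nonneg w
  · nlinarith [real_inner_le_norm v w]

theorem norm_le_of_mem_closure {v : H} {S : Set H} (hS : S ⊆ {w | ‖v‖ ^ 2 ≤ ⟪v, w⟫}) {w : H}
    (hw : w ∈ closure S) : ‖v‖ ≤ ‖w‖ :=
  norm_le_of_sq_le_inner <|
    closure_minimal hS (isClosed_le continuous_const (continuous_const.inner continuous_id)) hw

theorem isFirmlyNonexpansive_range_of_nonexpansive {ι : Type*} {x y : ι → H}
    (hne : ∀ i j, ‖y i - y j‖ ≤ ‖x i - x j‖) (v : H) :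
    IsFirmlyNonexpansive (Set.range fun i => (x i, (2⁻¹ : ℝ) • (x i - y i - v))) := by
  rintro _ ⟨i, rfl⟩ _ ⟨j, rfl⟩
  rw [← norm_two_smul_sub_le_iff, show (2 : ℝ) • ((2⁻¹ : ℝ) • (x i - y i - v)
    - (2⁻¹ : ℝ) • (x j - y j - v)) - (x i - x j) = -(y i - y j) by module, norm_neg]
  exact hne i j

theorem nonexpansive_of_firm {G : H → H} (hG : ∀ z w, ‖G z - G w‖ ^ 2 ≤ ⟪z - w, G z - G w⟫)
    (v : H) : Nonexpansive fun z => z - v - (2 : ℝ) • G z := fun z w => by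
  rw [← norm_neg, show -(z - v - (2 : ℝ) • G z - (w - v - (2 : ℝ) • G w))
    = (2 : ℝ) • (G z - G w) - (z - w) by module]
  exact (norm_two_smul_sub_le_iff _ _).2 (hG z w)

end FirmExtension

/-- Interpolability with a prescribed infimal displacement vector: data satisfying the
nonexpansiveness inequalities, with `v = x_⋆ - y_⋆` and `⟨x_i - y_i, v⟩ ≥ ‖v‖²` for all `i`,
can be interpolated by a nonexpansive operator on all of `H` whose infimal displacement
vector (the minimal-norm element of `cl(ran(I - T̃))`) is `v`. -/
theorem nonexpansive_interpolation_with_idv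
    {H : Type*} [NormedAddCommGroup H] [InnerProductSpace ℝ H] [CompleteSpace H]
    {ι : Type*} (x y : ι → H)
    (hne : ∀ i j, ‖y i - y j‖ ≤ ‖x i - x j‖)
    (star : ι) (v : H) (hv : v = x star - y star)
    (hproj : ∀ i, ⟪x i - y i, v⟫ ≥ ‖v‖ ^ 2) :
    ∃ T : H → H, Nonexpansive T ∧ (∀ i, T (x i) = y i) ∧
      v ∈ closure (Set.range fun z => z - T z) ∧
      ∀ w ∈ closure (Set.range fun z => z - T z), ‖v‖ ≤ ‖w‖ := by
  obtain ⟨G, hG, hGx, hGK⟩ := (isFirmlyNonexpansive_range_of_nonexpansive hne v).exists_extension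
    ⟨_, star, rfl⟩ (isClosed_le continuous_const (continuous_const.inner continuous_id))
    (convex_halfSpace_ge (innerₛₗ ℝ v).isLinear 0) <| by
      rintro _ ⟨i, rfl⟩
      show 0 ≤ ⟪v, (2⁻¹ : ℝ) • (x i - y i - v)⟫
      rw [real_inner_smul_right]
      refine mul_nonneg (by norm_num) ?_
      rw [inner_sub_right, real_inner_self_eq_norm_sq, real_inner_comm]
      linarith [hproj i]
  have hGx' : ∀ i, G (x i) = (2⁻¹ : ℝ) • (x i - y i - v) := fun i => hGx _ ⟨i, rfl⟩
  refine ⟨_, nonexpansive_of_firm hG v, fun i => ?_, subset_closure ⟨x star, ?_⟩,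
    fun w hw => norm_le_of_mem_closure ?_ hw⟩
  · rw [hGx']
    module
  · dsimp only
    rw [hGx', hv]
    module
  · rintro _ ⟨z, rfl⟩
    show ‖v‖ ^ 2 ≤ ⟪v, z - (z - v - (2 : ℝ) • G z)⟫
    rw [show z - (z - v - (2 : ℝ) • G z) = v + (2 : ℝ) • G z by abel, inner_add_right,
      real_inner_self_eq_norm_sq, real_inner_smul_right]
    linarith [show 0 ≤ ⟪v, G z⟫ from hGK z]
end
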